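/- Let Ω ⊆ ℂ^d be open and let 𝒳 be a Hausdorff topological vector space of holomorphic functions on Ω satisfying (P1)–(P3). Let 𝒬 ⊆ 𝒫_d be a family of polynomials with greatest common divisor 𝔤(𝒬), and write I(𝒬) = 𝔤(𝒬)·𝔦_𝒬 where 𝔦_𝒬 is an ideal of 𝒫_d with 𝔤(𝔦_𝒬) = 1. Then 𝒬 is jointly cyclic in 𝒳 if and only if 𝔤(𝒬) is cyclic in 𝒳 and 𝔦_𝒬 is jointly cyclic in 𝒳. -/

import Mathlib

/-!
A Hausdorff topological vector space `X` of holomorphic functions on an open set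
`Ω ⊆ ℂ^d` satisfying (P1) (polynomials are dense), (P2) (point evaluations at points
of `Ω` are continuous) and (P3) (the shift operators, and hence multiplication by any
polynomial, are continuous linear self maps).
-/
structure HoloFunSpace (d : ℕ) (Ω : Set (Fin d → ℂ)) (X : Type*)
    [AddCommGroup X] [Module ℂ X] [TopologicalSpace X] where
  /-- The realization of elements of `X` as (holomorphic) functions on `Ω`. -/
  toFun : X →ₗ[ℂ] ((Fin d → ℂ) → ℂ)
  holo : ∀ F : X, DifferentiableOn ℂ (toFun F) Ω
  inj : ∀ F G : X, Set.EqOn (toFun F) (toFun G) Ω → F = G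
  /-- The polynomials, as elements of `X`. -/
  poly : MvPolynomial (Fin d) ℂ →ₗ[ℂ] X
  poly_eval : ∀ (P : MvPolynomial (Fin d) ℂ), ∀ z ∈ Ω,
    toFun (poly P) z = MvPolynomial.eval z P
  /-- (P1): polynomials are dense in `X`. -/
  dense_poly : Dense (Set.range fun P : MvPolynomial (Fin d) ℂ => poly P)
  /-- (P2): point evaluations at points of `Ω` are continuous. -/
  eval_cont : ∀ z ∈ Ω, Continuous fun F : X => toFun F z
  /-- Multiplication by a polynomial, a continuous linear self map of `X`;
  (P3) is the special case of the shifts `mul (X j)`. -/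
  mul : MvPolynomial (Fin d) ℂ → X →L[ℂ] X
  mul_eval : ∀ (P : MvPolynomial (Fin d) ℂ) (F : X), ∀ z ∈ Ω,
    toFun (mul P F) z = MvPolynomial.eval z P * toFun F z

namespace HoloFunSpace

variable {d : ℕ} {Ω : Set (Fin d → ℂ)} {X : Type*}
  [AddCommGroup X] [Module ℂ X] [TopologicalSpace X]

/-- The maximal domain `Ω_max`: all `w ∈ ℂ^d` such that evaluation at `w`, defined on
polynomials, extends to a continuous linear functional on `X`. -/
def maxDomain (H : HoloFunSpace d Ω X) : Set (Fin d → ℂ) :=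
  {w | ∃ Λ : X →L[ℂ] ℂ, ∀ P : MvPolynomial (Fin d) ℂ, Λ (H.poly P) = MvPolynomial.eval w P}

/-- The invariant subspace `S[F]`: the closure of `{P · F : P ∈ 𝒫_d}`. -/
def invSub (H : HoloFunSpace d Ω X) (F : X) : Set X :=
  closure (Set.range fun P : MvPolynomial (Fin d) ℂ => H.mul P F)

/-- `F` is cyclic if `S[F] = X`. -/
def Cyclic (H : HoloFunSpace d Ω X) (F : X) : Prop := H.invSub F = Set.univ

/-- The joint invariant subspace `S[𝓕]`: the closed linear span of `⋃_{F ∈ 𝓕} S[F]`. -/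
def jointInvSub (H : HoloFunSpace d Ω X) (𝓕 : Set X) : Set X :=
  closure (Submodule.span ℂ (⋃ F ∈ 𝓕, H.invSub F) : Set X)

/-- A family `𝓕` is jointly cyclic if `S[𝓕] = X`. -/
def JointlyCyclic (H : HoloFunSpace d Ω X) (𝓕 : Set X) : Prop :=
  H.jointInvSub 𝓕 = Set.univ

end HoloFunSpace


/-!
Both invariant subspaces in the statement are closures of images of ideals:
`S[𝒬]` is the closure of `I(𝒬)` and `S[g]` that of `(g)`, so joint cyclicity of a family of
polynomials means density of the ideal it generates. For ideals `J`, `K` the product `J K`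
is dense iff both are: if `K` is dense then `1` is a limit of elements of `K`, and
multiplying by `j ∈ J`, a continuous map, shows that `j` is a limit of elements of `J K`.
Apply this to `I(𝒬) = (g) 𝔦`.
-/

namespace HoloFunSpace

variable {d : ℕ} {Ω : Set (Fin d → ℂ)} {X : Type*}
  [AddCommGroup X] [Module ℂ X] [TopologicalSpace X]
  (H : HoloFunSpace d Ω X)

theorem mul_poly (P Q : MvPolynomial (Fin d) ℂ) : H.mul P (H.poly Q) = H.poly (P * Q) :=
  H.inj _ _ fun z hz => by
    rw [H.mul_eval _ _ z hz, H.poly_eval _ z hz, H.poly_eval _ z hz, map_mul]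

theorem invSub_poly (Q : MvPolynomial (Fin d) ℂ) :
    H.invSub (H.poly Q) = closure (H.poly '' Ideal.span {Q}) := by
  have hrange : (Set.range fun P => H.mul P (H.poly Q)) = H.poly '' Ideal.span {Q} := by
    ext F
    simp only [Set.mem_range, Set.mem_image, SetLike.mem_coe, Ideal.mem_span_singleton',
      H.mul_poly]
    constructor
    · rintro ⟨P, rfl⟩
      exact ⟨P * Q, ⟨P, rfl⟩, rfl⟩
    · rintro ⟨_, ⟨P, rfl⟩, rfl⟩
      exact ⟨P, rfl⟩
  rw [invSub, hrange]

theorem cyclic_poly_iff (Q : MvPolynomial (Fin d) ℂ) :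
    H.Cyclic (H.poly Q) ↔ Dense (H.poly '' Ideal.span {Q}) := by
  rw [Cyclic, invSub_poly, dense_iff_closure_eq]

theorem poly_image_subset_closure_mul {J K : Ideal (MvPolynomial (Fin d) ℂ)}
    (hK : Dense (H.poly '' K)) : H.poly '' J ⊆ closure (H.poly '' (J * K)) := by
  rintro _ ⟨j, hj, rfl⟩
  have hmaps : Set.MapsTo (H.mul j) (H.poly '' K) (H.poly '' (J * K)) := by
    rintro _ ⟨k, hk, rfl⟩
    exact ⟨j * k, Ideal.mul_mem_mul hj hk, (H.mul_poly j k).symm⟩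
  have hj_eq : H.poly j = H.mul j (H.poly 1) := by rw [mul_poly, mul_one]
  rw [hj_eq]
  exact map_mem_closure (H.mul j).continuous (hK _) hmaps

theorem dense_poly_image_mul_iff {J K : Ideal (MvPolynomial (Fin d) ℂ)} :
    Dense (H.poly '' (J * K)) ↔ Dense (H.poly '' J) ∧ Dense (H.poly '' K) := by
  refine ⟨fun hJK => ⟨hJK.mono ?_, hJK.mono ?_⟩, fun ⟨hJ, hK⟩ => ?_⟩
  · exact Set.image_mono Ideal.mul_le_left
  · exact Set.image_mono Ideal.mul_le_right
  · exact (hJ.mono (H.poly_image_subset_closure_mul hK)).of_closure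

variable [IsTopologicalAddGroup X] [ContinuousSMul ℂ X]

theorem jointInvSub_poly_image (S : Set (MvPolynomial (Fin d) ℂ)) :
    H.jointInvSub (H.poly '' S) = closure (H.poly '' Ideal.span S) := by
  refine subset_antisymm (closure_minimal ?_ isClosed_closure) (closure_mono ?_)
  · let M : Submodule ℂ X := ((Ideal.span S).restrictScalars ℂ).map H.poly
    change _ ⊆ (M.topologicalClosure : Set X)
    refine Submodule.span_le.mpr (Set.iUnion₂_subset ?_)
    rintro _ ⟨Q, hQ, rfl⟩
    rw [invSub_poly]
    exact closure_mono (Set.image_mono (Ideal.span_mono (Set.singleton_subset_iff.mpr hQ)))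
  · rintro _ ⟨r, hr, rfl⟩
    obtain ⟨n, c, Q, rfl⟩ := Submodule.mem_span_set'.mp hr
    rw [map_sum]
    refine Submodule.sum_mem _ fun i _ => Submodule.subset_span ?_
    rw [smul_eq_mul, ← mul_poly]
    exact Set.mem_biUnion (Set.mem_image_of_mem _ (Q i).2) (subset_closure ⟨c i, rfl⟩)

theorem jointlyCyclic_poly_image_iff (S : Set (MvPolynomial (Fin d) ℂ)) :
    H.JointlyCyclic (H.poly '' S) ↔ Dense (H.poly '' Ideal.span S) := by
  rw [JointlyCyclic, jointInvSub_poly_image, dense_iff_closure_eq]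

end HoloFunSpace

open HoloFunSpace in
theorem jointlyCyclic_iff_gcd_cyclic_and_ideal_jointlyCyclic_general
    {d : ℕ} {Ω : Set (Fin d → ℂ)} {X : Type*}
    [AddCommGroup X] [Module ℂ X] [TopologicalSpace X]
    [IsTopologicalAddGroup X] [ContinuousSMul ℂ X]
    (H : HoloFunSpace d Ω X)
    (𝒬 : Set (MvPolynomial (Fin d) ℂ)) (g : MvPolynomial (Fin d) ℂ)
    (𝔦 : Ideal (MvPolynomial (Fin d) ℂ))
    (h𝔦 : Ideal.span 𝒬 = Ideal.span {g} * 𝔦) :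
    H.JointlyCyclic (H.poly '' 𝒬) ↔
      (H.Cyclic (H.poly g) ∧
        H.JointlyCyclic (H.poly '' (𝔦 : Set (MvPolynomial (Fin d) ℂ)))) := by
  rw [jointlyCyclic_poly_image_iff, jointlyCyclic_poly_image_iff, cyclic_poly_iff,
    Ideal.span_eq, h𝔦, dense_poly_image_mul_iff]

open HoloFunSpace in
/-- Let `𝒬 ⊆ 𝒫_d` be a family of polynomials, let `g = 𝔤(𝒬)` be a
greatest common divisor of `𝒬`, and write `I(𝒬) = g · 𝔦` where `𝔦` is an ideal of
`𝒫_d` with `𝔤(𝔦) = 1` (i.e. any common divisor of `𝔦` is a unit).  Then `𝒬` is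
jointly cyclic if and only if `g` is cyclic and `𝔦` is jointly cyclic. -/
theorem jointlyCyclic_iff_gcd_cyclic_and_ideal_jointlyCyclic
    {d : ℕ} {Ω : Set (Fin d → ℂ)} {X : Type*}
    [AddCommGroup X] [Module ℂ X] [TopologicalSpace X]
    [IsTopologicalAddGroup X] [ContinuousSMul ℂ X] [T2Space X]
    (hΩ : IsOpen Ω) (H : HoloFunSpace d Ω X)
    (𝒬 : Set (MvPolynomial (Fin d) ℂ)) (g : MvPolynomial (Fin d) ℂ)
    (hg_dvd : ∀ P ∈ 𝒬, g ∣ P)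
    (hg_gcd : ∀ q : MvPolynomial (Fin d) ℂ, (∀ P ∈ 𝒬, q ∣ P) → q ∣ g)
    (𝔦 : Ideal (MvPolynomial (Fin d) ℂ))
    (h𝔦 : Ideal.span 𝒬 = Ideal.span {g} * 𝔦)
    (h𝔦gcd : ∀ q : MvPolynomial (Fin d) ℂ, (∀ P ∈ 𝔦, q ∣ P) → IsUnit q) :
    H.JointlyCyclic (H.poly '' 𝒬) ↔
      (H.Cyclic (H.poly g) ∧
        H.JointlyCyclic (H.poly '' (𝔦 : Set (MvPolynomial (Fin d) ℂ)))) :=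
  jointlyCyclic_iff_gcd_cyclic_and_ideal_jointlyCyclic_general H 𝒬 g 𝔦 h𝔦
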